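/- For real numbers a, b with 0 < b ≤ a ≤ 1, the binary divergence satisfies D(a‖b) = a·ln(a/b) + (1−a)·ln((1−a)/(1−b)) ≥ a·(max(ln(a/b) − 1, 0)). -/

import Mathlib

/-!
Each term of the divergence satisfies `x log (x / y) ≥ x - y` (this is `log t ≥ 1 - 1/t`). Adding
the two instances gives `D(a‖b) ≥ 0`; keeping the first term and bounding only the second gives
`D(a‖b) ≥ a log (a / b) + b - a ≥ a (log (a / b) - 1)`.
-/

open Real

theorem sub_le_mul_log_div {x y : ℝ} (hx : 0 ≤ x) (hy : 0 < y) : x - y ≤ x * log (x / y) := by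
  rcases hx.eq_or_lt with rfl | hx
  · simpa using hy.le
  have hlog : 1 - y / x ≤ log (x / y) := by
    simpa only [inv_div] using one_sub_inv_le_log_of_pos (div_pos hx hy)
  calc x - y = x * (1 - y / x) := by field_simp
    _ ≤ x * log (x / y) := mul_le_mul_of_nonneg_left hlog hx.le

/-- Binary KL divergence lower bound: for 0 < b ≤ a ≤ 1,
D(a‖b) = a ln(a/b) + (1-a) ln((1-a)/(1-b)) ≥ a · [ln(a/b) - 1]₊. -/
theorem binary_kl_lower_bound (a b : ℝ) (hb : 0 < b) (hba : b ≤ a) (ha : a ≤ 1) :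
    a * Real.log (a / b) + (1 - a) * Real.log ((1 - a) / (1 - b)) ≥
      a * max (Real.log (a / b) - 1) 0 := by
  have ha0 : 0 < a := hb.trans_le hba
  have hfirst : a - b ≤ a * log (a / b) := sub_le_mul_log_div ha0.le hb
  have hsecond : b - a ≤ (1 - a) * log ((1 - a) / (1 - b)) := by
    rcases ha.eq_or_lt with rfl | ha1
    · simpa using hba
    · have := sub_le_mul_log_div (sub_nonneg.2 ha) (sub_pos.2 (hba.trans_lt ha1))
      linarith
  rw [mul_max_of_nonneg _ _ ha0.le, mul_sub, mul_one, mul_zero]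
  exact max_le (by linarith) (by linarith)
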